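/- arXiv:math/0603014 — 2 statements merged into one kernel-verified Lean document; each statement's English description precedes it below -/
import Mathlib

section
/- Let (S_1, ..., S_n) be a demimartingale and let f : ℝ → ℝ be a nondecreasing convex function with f(S_j) integrable for each j. Then (f(S_1), ..., f(S_n)) is a demisubmartingale, i.e., E[(f(S_{j+1}) − f(S_j)) · ψ(f(S_1), ..., f(S_j))] ≥ 0 for every nonnegative coordinatewise nondecreasing bounded measurable ψ. -/
open MeasureTheory Filter Topology

set_option maxHeartbeats 1000000


noncomputable def NWsubgrad (f : ℝ → ℝ) (x : ℝ) : ℝ :=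
  sInf ((fun y => (f y - f x) / (y - x)) '' Set.Ioi x)

section NW
variable {f : ℝ → ℝ} (hfmono : Monotone f) (hfconv : ConvexOn ℝ Set.univ f)

lemma NW_ne (x : ℝ) : ((fun y => (f y - f x) / (y - x)) '' Set.Ioi x).Nonempty :=
  ⟨_, ⟨x + 1, by simp, rfl⟩⟩

include hfmono in
lemma NW_bdd (x : ℝ) : ∀ b ∈ (fun y => (f y - f x) / (y - x)) '' Set.Ioi x, 0 ≤ b := by
  rintro b ⟨y, hy, rfl⟩
  have : x < y := hy
  exact div_nonneg (by linarith [hfmono this.le]) (by linarith)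

include hfmono in
lemma NWsubgrad_nonneg (x : ℝ) : 0 ≤ NWsubgrad f x :=
  le_csInf (NW_ne x) (NW_bdd hfmono x)

include hfmono in
lemma NWsubgrad_le_slope {x y : ℝ} (h : x < y) :
    NWsubgrad f x ≤ (f y - f x) / (y - x) :=
  csInf_le ⟨0, NW_bdd hfmono x⟩ ⟨y, h, rfl⟩

include hfconv in
lemma NW_slope_le_subgrad {x y : ℝ} (h : y < x) :
    (f x - f y) / (x - y) ≤ NWsubgrad f x := by
  apply le_csInf (NW_ne x)
  rintro b ⟨z, hz, rfl⟩
  exact hfconv.slope_mono_adjacent (Set.mem_univ y) (Set.mem_univ z) h hz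

include hfmono hfconv in
lemma NWsubgrad_smul (x y : ℝ) : NWsubgrad f x * (y - x) ≤ f y - f x := by
  rcases lt_trichotomy x y with h | h | h
  · have h1 := NWsubgrad_le_slope hfmono h
    rw [le_div_iff₀ (by linarith)] at h1
    linarith
  · simp [h]
  · have h1 := NW_slope_le_subgrad hfconv h
    rw [div_le_iff₀ (by linarith)] at h1
    nlinarith

include hfmono hfconv in
lemma NWsubgrad_mono : Monotone (NWsubgrad f) := by
  intro x y hxy
  rcases eq_or_lt_of_le hxy with rfl | h
  · exact le_refl _
  apply le_csInf (NW_ne y)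
  rintro b ⟨z, hz, rfl⟩
  calc NWsubgrad f x ≤ (f y - f x) / (y - x) := NWsubgrad_le_slope hfmono h
    _ ≤ (f z - f y) / (z - y) := hfconv.slope_mono_adjacent (Set.mem_univ x) (Set.mem_univ z) h hz

end NW

noncomputable def NWF (f : ℝ → ℝ) (M x : ℝ) : ℝ :=
  if x ≤ M then f x else f M + NWsubgrad f M * (x - M)

section NWF
variable {f : ℝ → ℝ} (hfmono : Monotone f) (hfconv : ConvexOn ℝ Set.univ f)

include hfmono hfconv in
lemma NWF_subgrad (M x y : ℝ) :
    NWsubgrad f (min x M) * (y - x) ≤ NWF f M y - NWF f M x := by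
  have gM := NWsubgrad_mono hfmono hfconv (f := f)
  have gnn := NWsubgrad_nonneg hfmono (f := f)
  rcases le_or_gt x M with hx | hx
  · rw [min_eq_left hx]
    rcases le_or_gt y M with hy | hy
    · simpa [NWF, hx, hy] using NWsubgrad_smul hfmono hfconv x y
    · simp only [NWF, hx, if_pos, if_neg (not_le.mpr hy)]
      have h1 := NWsubgrad_smul hfmono hfconv x M
      have h2 : NWsubgrad f x * (y - M) ≤ NWsubgrad f M * (y - M) :=
        mul_le_mul_of_nonneg_right (gM hx) (by linarith)
      nlinarith
  · rw [min_eq_right hx.le]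
    rcases le_or_gt y M with hy | hy
    · simp only [NWF, hy, if_pos, if_neg (not_le.mpr hx)]
      have h1 := NWsubgrad_smul hfmono hfconv M y
      nlinarith
    · simp only [NWF, if_neg (not_le.mpr hx), if_neg (not_le.mpr hy)]
      ring_nf
      nlinarith

include hfmono hfconv in
lemma NWF_le (M x : ℝ) : NWF f M x ≤ f x := by
  rcases le_or_gt x M with hx | hx
  · simp [NWF, hx]
  · simp only [NWF, if_neg (not_le.mpr hx)]
    have := NWsubgrad_smul hfmono hfconv M x
    linarith

include hfmono hfconv in
lemma NWF_ge (M x : ℝ) : f (min x M) ≤ NWF f M x := by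
  rcases le_or_gt x M with hx | hx
  · simp [NWF, hx, min_eq_left hx]
  · simp only [NWF, if_neg (not_le.mpr hx), min_eq_right hx.le]
    nlinarith [NWsubgrad_nonneg hfmono (f := f) M]

include hfmono hfconv in
lemma NWF_mono (M : ℝ) : Monotone (NWF f M) := by
  intro x y hxy
  have h := NWF_subgrad hfmono hfconv M x y
  nlinarith [NWsubgrad_nonneg hfmono (f := f) (min x M)]

include hfmono hfconv in
lemma NWF_abs_le (M x : ℝ) (hM : 1 ≤ M) : |NWF f M x| ≤ |f x| + |f 1| := by
  have h1 := NWF_le hfmono hfconv M x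
  have h2 := NWF_ge hfmono hfconv M x
  have h3 : f (min x 1) ≤ NWF f M x :=
    le_trans (hfmono (min_le_min (le_refl x) hM)) h2
  have h4 : min (f x) (f 1) ≤ f (min x 1) := by
    rcases le_total x 1 with h | h
    · exact le_trans (min_le_left _ _) (le_of_eq (by rw [min_eq_left h]))
    · exact le_trans (min_le_right _ _) (le_of_eq (by rw [min_eq_right h]))
  rw [abs_le]
  constructor
  · have := min_le_min (neg_abs_le (f x)) (neg_abs_le (f 1))
    have h5 : min (-|f x|) (-|f 1|) ≤ NWF f M x := le_trans this (le_trans h4 h3)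
    rcases min_le_iff.mp (le_refl (min (-|f x|) (-|f 1|))) with h6 | h6 <;> nlinarith [le_min_iff.mp (le_refl (min (-|f x|) (-|f 1|))), abs_nonneg (f x), abs_nonneg (f 1)]
  · calc NWF f M x ≤ f x := h1
      _ ≤ |f x| := le_abs_self _
      _ ≤ |f x| + |f 1| := by nlinarith [abs_nonneg (f 1)]

end NWF

/-- Newman–Wright: if (S_1,...,S_n) is a demimartingale and f is a
nondecreasing convex function with each f(S_j) integrable, then (f(S_1),...,f(S_n))
is a demisubmartingale. -/
theorem demisubmartingale_of_convex_of_demimartingale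
    {Ω : Type*} [MeasurableSpace Ω] (μ : Measure Ω) [IsProbabilityMeasure μ]
    (n : ℕ) (S : ℕ → Ω → ℝ)
    (hint : ∀ j, 1 ≤ j → j ≤ n → Integrable (S j) μ)
    (hdemi : ∀ (j : ℕ) (hj1 : 1 ≤ j) (hjn : j + 1 ≤ n),
      ∀ ψ : (Fin j → ℝ) → ℝ, Monotone ψ → Measurable ψ → (∃ C, ∀ x, |ψ x| ≤ C) →
        0 ≤ ∫ ω, (S (j + 1) ω - S j ω) * ψ (fun i => S (i + 1) ω) ∂μ)
    (f : ℝ → ℝ) (hfmono : Monotone f) (hfconv : ConvexOn ℝ Set.univ f)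
    (hfint : ∀ j, 1 ≤ j → j ≤ n → Integrable (fun ω => f (S j ω)) μ) :
    ∀ (j : ℕ) (hj1 : 1 ≤ j) (hjn : j + 1 ≤ n),
      ∀ ψ : (Fin j → ℝ) → ℝ, (∀ x, 0 ≤ ψ x) → Monotone ψ → Measurable ψ →
        (∃ C, ∀ x, |ψ x| ≤ C) →
        0 ≤ ∫ ω, (f (S (j + 1) ω) - f (S j ω)) * ψ (fun i => f (S (i + 1) ω)) ∂μ := by
  intro j hj1 hjn ψ hψ0 hψmono hψmeas hψbdd
  obtain ⟨C, hC⟩ := hψbdd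
  have hC0 : 0 ≤ C := le_trans (abs_nonneg _) (hC 0)
  have gmono := NWsubgrad_mono hfmono hfconv
  have gnn := NWsubgrad_nonneg hfmono (f := f)
  have hXint : Integrable (S j) μ := hint j hj1 (by omega)
  have hYint : Integrable (S (j+1)) μ := hint (j+1) (by omega) hjn
  have hfX : Integrable (fun ω => f (S j ω)) μ := hfint j hj1 (by omega)
  have hfY : Integrable (fun ω => f (S (j+1) ω)) μ := hfint (j+1) (by omega) hjn
  -- the vector of past values is a.e. measurable
  have hSm : ∀ i : Fin j, AEMeasurable (S ((i:ℕ)+1)) μ := fun i =>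
    (hint ((i:ℕ)+1) (by omega) (by have := i.isLt; omega)).aemeasurable
  have hT : AEMeasurable (fun ω (i : Fin j) => S ((i:ℕ)+1) ω) μ := by
    refine ⟨fun ω i => (hSm i).mk _ ω,
      measurable_pi_lambda _ fun i => (hSm i).measurable_mk, ?_⟩
    have hall : ∀ᵐ ω ∂μ, ∀ i : Fin j, S ((i:ℕ)+1) ω = (hSm i).mk _ ω :=
      ae_all_iff.mpr fun i => (hSm i).ae_eq_mk
    filter_upwards [hall] with ω hω
    funext i; exact hω i
  have hmapmeas : Measurable (fun v : Fin j → ℝ => ψ (fun i => f (v i))) :=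
    hψmeas.comp (measurable_pi_lambda _ fun i =>
      hfmono.measurable.comp (measurable_pi_apply i))
  have hψv : AEMeasurable (fun ω => ψ (fun i => f (S ((i:ℕ)+1) ω))) μ :=
    hmapmeas.comp_aemeasurable hT
  -- index of the last past value
  have hj0 : 0 < j := hj1
  set idx : Fin j := ⟨j - 1, by omega⟩ with hidxdef
  have hidx : (idx : ℕ) + 1 = j := by simp [hidxdef]; omega
  -- truncation levels
  set M : ℕ → ℝ := fun k => (k : ℝ) + 1 with hMdef
  have hM1 : ∀ k, (1:ℝ) ≤ M k := fun k => by
    simp [hMdef]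
  -- the auxiliary ψ's for the demimartingale property
  set φ : ℕ → (Fin j → ℝ) → ℝ :=
    fun k v => NWsubgrad f (min (v idx) (M k)) * ψ (fun i => f (v i)) with hφdef
  have hφmono : ∀ k, Monotone (φ k) := by
    intro k v w hvw
    exact mul_le_mul (gmono (min_le_min (hvw idx) le_rfl))
      (hψmono (fun i => hfmono (hvw i))) (hψ0 _) (gnn _)
  have hφmeas : ∀ k, Measurable (φ k) := by
    intro k
    exact (gmono.measurable.comp
      ((measurable_pi_apply idx).min measurable_const)).mul hmapmeas
  have hφbdd : ∀ k, ∀ v, |φ k v| ≤ NWsubgrad f (M k) * C := by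
    intro k v
    rw [hφdef, abs_mul, abs_of_nonneg (gnn _)]
    exact mul_le_mul (gmono (min_le_right _ _)) (hC _) (abs_nonneg _) (gnn _)
  have hk : ∀ k, 0 ≤ ∫ ω, (S (j+1) ω - S j ω) * φ k (fun i => S ((i:ℕ)+1) ω) ∂μ :=
    fun k => hdemi j hj1 hjn (φ k) (hφmono k) (hφmeas k)
      ⟨NWsubgrad f (M k) * C, hφbdd k⟩
  -- the truncated integrands
  set G : ℕ → Ω → ℝ := fun k ω =>
    (NWF f (M k) (S (j+1) ω) - NWF f (M k) (S j ω)) *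
      ψ (fun i => f (S ((i:ℕ)+1) ω)) with hGdef
  -- integrability of NWF compositions
  have hNWFint : ∀ k, ∀ m : ℕ, Integrable (S m) μ →
      Integrable (fun ω => f (S m ω)) μ →
      Integrable (fun ω => NWF f (M k) (S m ω)) μ := by
    intro k m hSint hfSint
    refine Integrable.mono' (hfSint.abs.add (integrable_const |f 1|))
      ((NWF_mono hfmono hfconv (M k)).measurable.comp_aemeasurable
        hSint.aemeasurable).aestronglyMeasurable ?_
    filter_upwards with ω
    simpa [Real.norm_eq_abs] using NWF_abs_le hfmono hfconv (M k) (S m ω) (hM1 k)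
  have hGint : ∀ k, Integrable (G k) μ := by
    intro k
    have h1 := Integrable.bdd_mul
      ((hNWFint k (j+1) hYint hfY).sub (hNWFint k j hXint hfX))
      hψv.aestronglyMeasurable
      (c := C) (Filter.Eventually.of_forall fun ω => by simpa [Real.norm_eq_abs] using hC _)
    exact h1.congr (Filter.Eventually.of_forall fun ω => mul_comm _ _)
  have hRint : ∀ k, Integrable
      (fun ω => (S (j+1) ω - S j ω) * φ k (fun i => S ((i:ℕ)+1) ω)) μ := by
    intro k
    have hφT : AEMeasurable (fun ω => φ k (fun i => S ((i:ℕ)+1) ω)) μ :=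
      ⟨fun ω => φ k (hT.mk _ ω), (hφmeas k).comp hT.measurable_mk, by
        filter_upwards [hT.ae_eq_mk] with ω h
        exact congrArg (φ k) h⟩
    have hYX : Integrable (fun ω => S (j+1) ω - S j ω) μ := hYint.sub hXint
    refine Integrable.mono' (hYX.abs.const_mul (NWsubgrad f (M k) * C))
      (hYX.aemeasurable.mul hφT).aestronglyMeasurable ?_
    filter_upwards with ω
    rw [Real.norm_eq_abs]
    calc |(S (j+1) ω - S j ω) * φ k (fun i => S ((i:ℕ)+1) ω)|
        = |φ k (fun i => S ((i:ℕ)+1) ω)| * |S (j+1) ω - S j ω| := by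
          rw [abs_mul, mul_comm]
      _ ≤ (NWsubgrad f (M k) * C) * |S (j+1) ω - S j ω| :=
          mul_le_mul_of_nonneg_right (hφbdd k (fun i => S ((i:ℕ)+1) ω)) (abs_nonneg _)
  -- pointwise comparison
  have hpt : ∀ k, ∀ ω,
      (S (j+1) ω - S j ω) * φ k (fun i => S ((i:ℕ)+1) ω) ≤ G k ω := by
    intro k ω
    have hS : S ((idx:ℕ)+1) ω = S j ω := by rw [hidx]
    have hsub := NWF_subgrad hfmono hfconv (M k) (S j ω) (S (j+1) ω)
    calc (S (j+1) ω - S j ω) * φ k (fun i => S ((i:ℕ)+1) ω)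
        = (NWsubgrad f (min (S j ω) (M k)) * (S (j+1) ω - S j ω)) *
            ψ (fun i => f (S ((i:ℕ)+1) ω)) := by
          rw [hφdef]; simp only [hS]; ring
      _ ≤ G k ω := by
          rw [hGdef]
          exact mul_le_mul_of_nonneg_right hsub (hψ0 _)
  have hGnn : ∀ k, 0 ≤ ∫ ω, G k ω ∂μ := by
    intro k
    exact le_trans (hk k) (integral_mono (hRint k) (hGint k) (hpt k))
  -- dominated convergence
  have hlim : Tendsto (fun k => ∫ ω, G k ω ∂μ) atTop
      (𝓝 (∫ ω, (f (S (j+1) ω) - f (S j ω)) * ψ (fun i => f (S ((i:ℕ)+1) ω)) ∂μ)) := by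
    refine tendsto_integral_of_dominated_convergence
      (fun ω => (|f (S (j+1) ω)| + |f (S j ω)| + 2 * |f 1|) * C)
      (fun k => (hGint k).aestronglyMeasurable)
      (((hfY.abs.add hfX.abs).add (integrable_const (2 * |f 1|))).mul_const C) ?_ ?_
    · intro k
      filter_upwards with ω
      rw [hGdef, Real.norm_eq_abs, abs_mul]
      refine mul_le_mul ?_ (hC _) (abs_nonneg _) (by positivity)
      calc |NWF f (M k) (S (j+1) ω) - NWF f (M k) (S j ω)|
          ≤ |NWF f (M k) (S (j+1) ω)| + |NWF f (M k) (S j ω)| := abs_sub _ _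
        _ ≤ (|f (S (j+1) ω)| + |f 1|) + (|f (S j ω)| + |f 1|) :=
            add_le_add (NWF_abs_le hfmono hfconv _ _ (hM1 k))
              (NWF_abs_le hfmono hfconv _ _ (hM1 k))
        _ = |f (S (j+1) ω)| + |f (S j ω)| + 2 * |f 1| := by ring
    · filter_upwards with ω
      obtain ⟨N, hN⟩ := exists_nat_ge (max (S j ω) (S (j+1) ω))
      refine Tendsto.congr' ?_ tendsto_const_nhds
      filter_upwards [eventually_ge_atTop N] with k hk'
      have hMk : max (S j ω) (S (j+1) ω) ≤ M k := by
        calc max (S j ω) (S (j+1) ω) ≤ (N:ℝ) := hN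
          _ ≤ (k:ℝ) := by exact_mod_cast hk'
          _ ≤ M k := by simp [hMdef]
      have h1 : NWF f (M k) (S j ω) = f (S j ω) := by
        rw [NWF, if_pos (le_trans (le_max_left _ _) hMk)]
      have h2 : NWF f (M k) (S (j+1) ω) = f (S (j+1) ω) := by
        rw [NWF, if_pos (le_trans (le_max_right _ _) hMk)]
      rw [hGdef]
      simp only [h1, h2]
  exact ge_of_tendsto' hlim hGnn
end

section
/- Let v be a real-valued L² process with v(0)=0, stationary increments, and satisfying the strengthened weak positive association condition. Then increments over disjoint intervals are positively correlated: for 0 ≤ a ≤ b ≤ c ≤ d with the increments square-integrable, Cov(v(d) − v(c), v(b) − v(a)) ≥ 0. -/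
open MeasureTheory

/-- under the strengthened weak positive association condition, increments
of v over disjoint intervals are positively correlated:
Cov(v(d) − v(c), v(b) − v(a)) ≥ 0 for 0 ≤ a ≤ b ≤ c ≤ d. -/
theorem increments_positively_correlated
    {Ω : Type*} [MeasurableSpace Ω] (μ : Measure Ω) [IsProbabilityMeasure μ]
    (v : ℝ → Ω → ℝ)
    (hmeas : ∀ t, Measurable (v t))
    (hL2 : ∀ t, 0 ≤ t → MemLp (v t) 2 μ)
    (hv0 : ∀ ω, v 0 ω = 0)
    (hstat : ∀ s t : ℝ, 0 ≤ s → 0 ≤ t →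
      Measure.map (fun ω => v (t + s) ω - v s ω) μ = Measure.map (fun ω => v t ω) μ)
    (hassoc : ∀ (n : ℕ) (hn : 1 ≤ n) (s t : ℝ), 0 ≤ s → 0 ≤ t →
      ∀ sTimes : Fin n → ℝ, StrictMono sTimes → (∀ i, 0 ≤ sTimes i) →
        sTimes ⟨n - 1, by omega⟩ = s →
      ∀ (φ : ℝ → ℝ) (ψ : (Fin n → ℝ) → ℝ),
        Monotone φ → Measurable φ → Monotone ψ → Measurable ψ →
        (∫ ω, φ (v t ω) ∂μ) * (∫ ω, ψ (fun i => v (sTimes i) ω) ∂μ)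
          ≤ ∫ ω, φ (v (t + s) ω - v s ω) * ψ (fun i => v (sTimes i) ω) ∂μ) :
    ∀ a b c d : ℝ, 0 ≤ a → a ≤ b → b ≤ c → c ≤ d →
      (∫ ω, (v d ω - v c ω) ∂μ) * (∫ ω, (v b ω - v a ω) ∂μ)
        ≤ ∫ ω, (v d ω - v c ω) * (v b ω - v a ω) ∂μ := by
  intro a b c d ha hab hbc hcd
  have hb : 0 ≤ b := ha.trans hab
  have hc : 0 ≤ c := hb.trans hbc
  have hd : 0 ≤ d := hc.trans hcd
  -- integrability of products
  have hIntMul : ∀ x y : ℝ, 0 ≤ x → 0 ≤ y → Integrable (fun ω => v x ω * v y ω) μ := by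
    intro x y hx hy
    have h := (hL2 y hy).smul (hL2 x hx) (p := 2) (q := 2) (r := 1)
    rw [memLp_one_iff_integrable] at h
    exact h.congr (Filter.Eventually.of_forall fun ω => by simp [smul_eq_mul])
  -- change of variables for integrals of functions of an increment
  have hchg : ∀ (f : ℝ → ℝ), Measurable f → ∀ s t : ℝ, 0 ≤ s → 0 ≤ t →
      ∫ ω, f (v (t + s) ω - v s ω) ∂μ = ∫ ω, f (v t ω) ∂μ := by
    intro f hf s t hs ht
    have h1 : ∫ ω, f (v (t + s) ω - v s ω) ∂μ
        = ∫ x, f x ∂(Measure.map (fun ω => v (t + s) ω - v s ω) μ) :=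
      (integral_map (((hmeas _).sub (hmeas _)).aemeasurable)
        hf.stronglyMeasurable.aestronglyMeasurable).symm
    rw [h1, hstat s t hs ht,
      integral_map (hmeas t).aemeasurable hf.stronglyMeasurable.aestronglyMeasurable]
  have hmean : ∀ s t : ℝ, 0 ≤ s → 0 ≤ t →
      ∫ ω, (v (t + s) ω - v s ω) ∂μ = ∫ ω, v t ω ∂μ :=
    fun s t hs ht => hchg id measurable_id s t hs ht
  have hsq : ∀ s t : ℝ, 0 ≤ s → 0 ≤ t →
      ∫ ω, (v (t + s) ω - v s ω) ^ 2 ∂μ = ∫ ω, (v t ω) ^ 2 ∂μ :=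
    fun s t hs ht => hchg (fun x => x ^ 2) (measurable_id.pow_const 2) s t hs ht
  -- cross moments in terms of V
  set V : ℝ → ℝ := fun t => ∫ ω, (v t ω) ^ 2 ∂μ with hVdef
  have hVsq : ∀ x : ℝ, 0 ≤ x → ∫ ω, v x ω * v x ω ∂μ = V x := by
    intro x hx
    simp only [hVdef]
    exact integral_congr_ae (Filter.Eventually.of_forall fun ω => (pow_two (v x ω)).symm)
  have hcross : ∀ x y : ℝ, 0 ≤ y → y ≤ x →
      ∫ ω, v x ω * v y ω ∂μ = (V x + V y - V (x - y)) / 2 := by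
    intro x y hy hxy
    have hx : 0 ≤ x := hy.trans hxy
    have h1 : ∫ ω, (v x ω - v y ω) ^ 2 ∂μ = V (x - y) := by
      have h := hsq y (x - y) hy (by linarith)
      rw [show x - y + y = x from by ring] at h
      exact h
    have e1 : ∫ ω, (v x ω - v y ω) ^ 2 ∂μ
        = ∫ ω, v x ω * v x ω ∂μ + ∫ ω, v y ω * v y ω ∂μ - 2 * ∫ ω, v x ω * v y ω ∂μ := by
      have ept : (fun ω => (v x ω - v y ω) ^ 2)
          = fun ω => (v x ω * v x ω + v y ω * v y ω) - 2 * (v x ω * v y ω) := by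
        funext ω; ring
      have iadd : Integrable (fun ω => v x ω * v x ω + v y ω * v y ω) μ :=
        (hIntMul x x hx hx).add (hIntMul y y hy hy)
      have imul2 : Integrable (fun ω => 2 * (v x ω * v y ω)) μ :=
        (hIntMul x y hx hy).const_mul 2
      rw [ept, integral_sub iadd imul2, integral_add (hIntMul x x hx hx) (hIntMul y y hy hy),
        integral_const_mul 2 _]
    rw [hVsq x hx, hVsq y hy] at e1
    rw [h1] at e1
    linarith
  -- expand the two product integrals
  have expandL : ∫ ω, (v d ω - v c ω) * (v b ω - v a ω) ∂μ
      = (∫ ω, v d ω * v b ω ∂μ) - (∫ ω, v d ω * v a ω ∂μ)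
        - (∫ ω, v c ω * v b ω ∂μ) + (∫ ω, v c ω * v a ω ∂μ) := by
    have ept : (fun ω => (v d ω - v c ω) * (v b ω - v a ω))
        = fun ω => (v d ω * v b ω - v d ω * v a ω) - (v c ω * v b ω - v c ω * v a ω) := by
      funext ω; ring
    have i1 : Integrable (fun ω => v d ω * v b ω - v d ω * v a ω) μ :=
      (hIntMul d b hd hb).sub (hIntMul d a hd ha)
    have i2 : Integrable (fun ω => v c ω * v b ω - v c ω * v a ω) μ :=
      (hIntMul c b hc hb).sub (hIntMul c a hc ha)
    rw [ept, integral_sub i1 i2,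
      integral_sub (hIntMul d b hd hb) (hIntMul d a hd ha),
      integral_sub (hIntMul c b hc hb) (hIntMul c a hc ha)]
    ring
  have expandR : ∫ ω, (v (d - a) ω - v (c - a) ω) * v (b - a) ω ∂μ
      = (∫ ω, v (d - a) ω * v (b - a) ω ∂μ) - (∫ ω, v (c - a) ω * v (b - a) ω ∂μ) := by
    have ept : (fun ω => (v (d - a) ω - v (c - a) ω) * v (b - a) ω)
        = fun ω => v (d - a) ω * v (b - a) ω - v (c - a) ω * v (b - a) ω := by
      funext ω; ring
    rw [ept, integral_sub (hIntMul _ _ (by linarith) (by linarith))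
      (hIntMul _ _ (by linarith) (by linarith))]
  -- the key identity of second moments
  have key_eq : ∫ ω, (v d ω - v c ω) * (v b ω - v a ω) ∂μ
      = ∫ ω, (v (d - a) ω - v (c - a) ω) * v (b - a) ω ∂μ := by
    rw [expandL, expandR, hcross d b hb (by linarith), hcross d a ha (by linarith),
      hcross c b hb (by linarith), hcross c a ha (by linarith),
      hcross (d - a) (b - a) (by linarith) (by linarith),
      hcross (c - a) (b - a) (by linarith) (by linarith),
      show d - a - (b - a) = d - b from by ring, show c - a - (b - a) = c - b from by ring]
    ring
  -- means via stationarity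
  have hmeanC : ∫ ω, (v d ω - v c ω) ∂μ = ∫ ω, v (d - c) ω ∂μ := by
    have h := hmean c (d - c) hc (by linarith)
    rw [show d - c + c = d from by ring] at h
    exact h
  have hmeanA : ∫ ω, (v b ω - v a ω) ∂μ = ∫ ω, v (b - a) ω ∂μ := by
    have h := hmean a (b - a) ha (by linarith)
    rw [show b - a + a = b from by ring] at h
    exact h
  rw [hmeanC, hmeanA, key_eq]
  -- apply the association hypothesis
  rcases lt_or_eq_of_le hbc with hlt | heq
  · have h := hassoc 2 (by norm_num) (c - a) (d - c) (by linarith) (by linarith)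
      ![b - a, c - a]
      (by
        intro i j hij
        fin_cases i <;> fin_cases j <;>
          simp_all [Matrix.cons_val_zero, Matrix.cons_val_one] <;> linarith)
      (by intro i; fin_cases i <;> simp <;> linarith)
      (by simp)
      (fun x => x) (fun x => x 0)
      monotone_id measurable_id (fun _ _ h => h 0) (measurable_pi_apply 0)
    simp only [Matrix.cons_val_zero] at h
    rw [show d - c + (c - a) = d - a from by ring] at h
    exact h
  · subst heq
    have h := hassoc 1 le_rfl (b - a) (d - b) (by linarith) (by linarith)
      (fun _ => b - a)
      (by intro i j hij; omega)
      (by intro i; show (0:ℝ) ≤ b - a; linarith)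
      rfl
      (fun x => x) (fun x => x 0)
      monotone_id measurable_id (fun _ _ h => h 0) (measurable_pi_apply 0)
    rw [show d - b + (b - a) = d - a from by ring] at h
    exact h
end
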